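/- arXiv:2411.17780 — 4 statements merged into one kernel-verified Lean document; each statement's English description precedes it below -/
import Mathlib

section
/- Let X be a finite simple graph admitting an (m, p)-semiregular automorphism ρ, where p is a prime, and let P be the set of orbits of ⟨ρ⟩ on V(X). Let C be a cycle of length k in the quotient graph X_P. Then the lift of C either contains a cycle of length kp in X, or it consists of p disjoint k-cycles of X; in the latter case d(A, A') = 1 for every edge AA' of C. -/
namespace StmtAux
open SimpleGraph Walk

variable {V : Type*} {G : SimpleGraph V}

lemma getVert_map {V' : Type*} {G' : SimpleGraph V'} (f : G →g G') {u v : V}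
    (w : G.Walk u v) (i : ℕ) : (w.map f).getVert i = f (w.getVert i) := by
  induction w generalizing i with
  | nil => rfl
  | cons h q ih => cases i <;> simp [ih]

lemma support_getElem {u v : V} (w : G.Walk u v) (i : ℕ) (hi : i < w.support.length) :
    w.support[i] = w.getVert i := by
  induction w generalizing i with
  | nil =>
    simp only [Walk.support_nil, List.length_singleton] at hi
    interval_cases i
    rfl
  | cons h q ih =>
    cases i with
    | zero => simp
    | succ n => simp only [Walk.support_cons, List.getElem_cons_succ, Walk.getVert_cons_succ];
                exact ih n (by simpa [Walk.length_support] using hi)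

lemma edges_getElem {u v : V} (w : G.Walk u v) (i : ℕ) (hi : i < w.edges.length) :
    w.edges[i] = s(w.getVert i, w.getVert (i+1)) := by
  induction w generalizing i with
  | nil => simp at hi
  | cons h q ih =>
    cases i with
    | zero => simp
    | succ n => simp only [Walk.edges_cons, List.getElem_cons_succ, Walk.getVert_cons_succ];
                exact ih n (by simpa using hi)

end StmtAux

namespace StmtAux
open SimpleGraph Walk

variable {V : Type*} {G : SimpleGraph V}

lemma getVert_inj_aux {u : V} (w : G.Walk u u)
    (hinj : ∀ i j, i < w.length → j < w.length → w.getVert i = w.getVert j → i = j)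
    {i j : ℕ} (hi : i ≤ w.length) (hj : j ≤ w.length)
    (h : w.getVert i = w.getVert j) :
    i = j ∨ (i = 0 ∧ j = w.length) ∨ (i = w.length ∧ j = 0) := by
  have hc : w.getVert w.length = w.getVert 0 := by simp
  rcases eq_or_lt_of_le hi with rfl | hi
  · rcases eq_or_lt_of_le hj with rfl | hj
    · exact Or.inl rfl
    · rcases Nat.eq_zero_or_pos w.length with h0 | h0
      · exact Or.inl (by omega)
      · right; right
        exact ⟨rfl, (hinj 0 j h0 hj (hc.symm.trans h)).symm ▸ rfl⟩
  · rcases eq_or_lt_of_le hj with rfl | hj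
    · rcases Nat.eq_zero_or_pos w.length with h0 | h0
      · omega
      · right; left
        exact ⟨hinj i 0 hi h0 (h.trans hc), rfl⟩
    · exact Or.inl (hinj i j hi hj h)

lemma isCycle_of_getVert {u : V} (w : G.Walk u u) (h3 : 3 ≤ w.length)
    (hinj : ∀ i j, i < w.length → j < w.length → w.getVert i = w.getVert j → i = j) :
    w.IsCycle := by
  have hne : w ≠ Walk.nil := by
    intro h; subst h; simp at h3
  rw [Walk.isCycle_def]
  refine ⟨⟨?_⟩, hne, ?_⟩
  · rw [List.nodup_iff_injective_getElem]
    rintro ⟨i, hi⟩ ⟨j, hj⟩ hij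
    have hi' : i < w.length := by simpa [Walk.length_edges] using hi
    have hj' : j < w.length := by simpa [Walk.length_edges] using hj
    simp only at hij
    rw [edges_getElem w i hi, edges_getElem w j hj, Sym2.eq_iff] at hij
    have : i = j := by
      rcases hij with ⟨h1, h2⟩ | ⟨h1, h2⟩
      · exact hinj i j hi' hj' h1
      · -- crossed case
        rcases getVert_inj_aux w hinj (by omega) (by omega) h1 with e | ⟨e1, e2⟩ | ⟨e1, e2⟩
        · rcases getVert_inj_aux w hinj (by omega) (by omega) h2 with f | ⟨f1, f2⟩ | ⟨f1, f2⟩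
          · omega
          · omega
          · omega
        · have : i + 1 = j := hinj (i+1) j (by omega) hj' h2
          omega
        · omega
    exact Fin.ext this
  · rw [List.nodup_iff_injective_getElem]
    rintro ⟨i, hi⟩ ⟨j, hj⟩ hij
    have hlen : w.support.tail.length = w.length := by
      simp [Walk.length_support]
    have hi' : i < w.length := by omega
    have hj' : j < w.length := by omega
    simp only [List.getElem_tail] at hij
    rw [support_getElem w (i+1) (by simp [Walk.length_support]; omega),
        support_getElem w (j+1) (by simp [Walk.length_support]; omega)] at hij
    rcases getVert_inj_aux w hinj (by omega) (by omega) hij with e | ⟨e1, e2⟩ | ⟨e1, e2⟩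
    · exact Fin.ext (by simp only [Fin.val_mk]; omega)
    · omega
    · omega

lemma IsCycle.getVert_inj {u : V} {w : G.Walk u u} (hw : w.IsCycle) :
    ∀ i j, i < w.length → j < w.length → w.getVert i = w.getVert j → i = j := by
  intro i j hi hj h
  have h3 := hw.three_le_length
  have htail := hw.support_nodup
  rw [List.nodup_iff_injective_getElem] at htail
  have hlen : w.support.tail.length = w.length := by simp [Walk.length_support]
  have key : ∀ a (ha : a ≤ w.length) (h1 : 1 ≤ a), w.getVert a = w.support.tail[a-1]'(by omega) := by
    intro a ha h1
    have hb : a - 1 + 1 < w.support.length := by rw [Walk.length_support]; omega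
    rw [List.getElem_tail, support_getElem w (a-1+1) hb]
    congr 1; omega
  rcases Nat.eq_zero_or_pos i with rfl | hi1
  · rcases Nat.eq_zero_or_pos j with rfl | hj1
    · rfl
    · have h0 : w.getVert w.length = w.getVert 0 := by simp
      have : w.support.tail[w.length - 1]'(by omega) = w.support.tail[j-1]'(by omega) := by
        rw [← key w.length le_rfl (by omega), ← key j (by omega) hj1, h0, h]
      have := htail (a₁ := ⟨w.length - 1, by omega⟩) (a₂ := ⟨j-1, by omega⟩) (by simpa using this)
      have := Fin.mk.injEq .. ▸ this
      omega
  · rcases Nat.eq_zero_or_pos j with rfl | hj1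
    · have h0 : w.getVert w.length = w.getVert 0 := by simp
      have : w.support.tail[i - 1]'(by omega) = w.support.tail[w.length-1]'(by omega) := by
        rw [← key i (by omega) hi1, ← key w.length le_rfl (by omega), h0, h]
      have := htail (a₁ := ⟨i-1, by omega⟩) (a₂ := ⟨w.length-1, by omega⟩) (by simpa using this)
      simp only [Fin.mk.injEq] at this
      omega
    · have : w.support.tail[i - 1]'(by omega) = w.support.tail[j-1]'(by omega) := by
        rw [← key i (by omega) hi1, ← key j (by omega) hj1, h]
      have := htail (a₁ := ⟨i-1, by omega⟩) (a₂ := ⟨j-1, by omega⟩) (by simpa using this)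
      simp only [Fin.mk.injEq] at this
      omega

end StmtAux

namespace StmtAux

lemma aux_period {V : Type*} [Fintype V] (σ : Equiv.Perm V) {p : ℕ} (hp : p.Prime)
    (horb : ∀ v : V, (MulAction.orbit (Subgroup.zpowers σ) v).ncard = p) :
    (∀ v, (σ ^ p) v = v) ∧ (∀ (t : ℕ) (v : V), (σ ^ t) v = v → p ∣ t) := by
  have hmp : ∀ v : V, Function.minimalPeriod (σ • ·) v = p := by
    intro v
    haveI : Fintype (MulAction.orbit (Subgroup.zpowers σ) v) := Fintype.ofFinite _
    rw [MulAction.minimalPeriod_eq_card, ← Nat.card_eq_fintype_card,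
      Nat.card_coe_set_eq, horb v]
  have hsmul : (σ • · : V → V) = ⇑σ := rfl
  constructor
  · intro v
    have h2 := Function.iterate_minimalPeriod (f := (σ • ·)) (x := v)
    rw [hmp v, hsmul, Equiv.Perm.iterate_eq_pow] at h2
    exact h2
  · intro t v h
    have h2 : Function.IsPeriodicPt (σ • ·) t v := by
      show (σ • ·)^[t] v = v
      rw [hsmul, Equiv.Perm.iterate_eq_pow]
      exact h
    have h3 := h2.minimalPeriod_dvd
    rwa [hmp v] at h3

lemma aux_zpow_eq {V : Type*} (σ : Equiv.Perm V) {p : ℕ} (hp : 0 < p)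
    (hone : σ ^ p = 1) (n : ℤ) : σ ^ n = σ ^ (n % (p : ℤ)).toNat := by
  have h0 : (0:ℤ) < (p:ℤ) := by exact_mod_cast hp
  have hd : n = (p:ℤ) * (n / (p:ℤ)) + n % (p:ℤ) := (Int.mul_ediv_add_emod n p).symm
  have hnn : 0 ≤ n % (p:ℤ) := Int.emod_nonneg n (by omega)
  calc σ ^ n = σ ^ ((p:ℤ) * (n / (p:ℤ)) + n % (p:ℤ)) := by rw [← hd]
    _ = (σ ^ (p:ℤ)) ^ (n / (p:ℤ)) * σ ^ (n % (p:ℤ)) := by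
        rw [zpow_add, zpow_mul]
    _ = σ ^ (n % (p:ℤ)) := by
        rw [← zpow_natCast σ p] at hone
        rw [hone, one_zpow, one_mul]
    _ = σ ^ (n % (p:ℤ)).toNat := by
        rw [← zpow_natCast σ (n % (p:ℤ)).toNat, Int.toNat_of_nonneg hnn]

end StmtAux

namespace StmtAux

/-- A power of a graph automorphism as a graph homomorphism. -/
def permHom {V : Type*} (X : SimpleGraph V) (σ : Equiv.Perm V)
    (h : ∀ a b : V, X.Adj a b → X.Adj (σ a) (σ b)) : X →g X :=
  ⟨⇑σ, fun hab => h _ _ hab⟩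

@[simp] lemma permHom_apply {V : Type*} (X : SimpleGraph V) (σ : Equiv.Perm V)
    (h : ∀ a b : V, X.Adj a b → X.Adj (σ a) (σ b)) (v : V) :
    permHom X σ h v = σ v := rfl

end StmtAux


namespace StmtAux

open SimpleGraph

theorem stmt2_aux {V : Type*} {Q : Type*} (X : SimpleGraph V)
    (q : V → Q) (σ : Equiv.Perm V) (p : ℕ) (hp : p.Prime)
    (hpowp : ∀ (mm : ℕ) (v : V), (σ ^ (p * mm)) v = v)
    (hdvd : ∀ (t : ℕ) (v : V), (σ ^ t) v = v → p ∣ t)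
    (hq_of : ∀ (t : ℕ) (v : V), q ((σ ^ t) v) = q v)
    (hq_iff : ∀ a b : V, q a = q b → ∃ t : ℕ, (σ ^ t) b = a)
    (hadj : ∀ (t : ℕ) (a b : V), X.Adj a b → X.Adj ((σ ^ t) a) ((σ ^ t) b))
    (XP : SimpleGraph Q)
    (hXPadj : ∀ B B' : Q, XP.Adj B B' →
      (∃ a b : V, q a = B ∧ q b = B' ∧ X.Adj a b) ∨
      (∃ a b : V, q a = B' ∧ q b = B ∧ X.Adj a b))
    (A : Q) (C : XP.Walk A A) (hC : C.IsCycle) :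
    (∃ (v : V) (w : X.Walk v v), w.IsCycle ∧ w.length = C.length * p ∧
      ∀ i ≤ C.length * p, q (w.getVert i) = C.getVert (i % C.length)) ∨
    ((∀ v : V, q v = A → ∃ w : X.Walk v v, w.IsCycle ∧ w.length = C.length ∧
        ∀ i ≤ C.length, q (w.getVert i) = C.getVert i) ∧
      (∀ i < C.length, ∀ x : V, q x = C.getVert i →
        (X.neighborSet x ∩ {y : V | q y = C.getVert (i + 1)}).ncard = 1) ∧
      (∀ i < C.length, ∀ y : V, q y = C.getVert (i + 1) →
        (X.neighborSet y ∩ {x : V | q x = C.getVert i}).ncard = 1)) := by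
  classical
  have hp1 : 0 < p := hp.pos
  set L := C.length with hLdef
  have hL3 : 3 ≤ L := hC.three_le_length
  have hcinj := StmtAux.IsCycle.getVert_inj hC
  -- edge lifting
  have helift : ∀ (B B' : Q), XP.Adj B B' → ∀ x : V, q x = B →
      ∃ y, X.Adj x y ∧ q y = B' := by
    intro B B' hBB' x hx
    rcases hXPadj B B' hBB' with h | h
    · obtain ⟨a, b, ha, hb, hab⟩ := h
      obtain ⟨t, ht⟩ := hq_iff x a (by rw [hx, ← ha])
      refine ⟨(σ ^ t) b, ?_, by rw [hq_of, hb]⟩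
      rw [← ht]
      exact hadj t a b hab
    · obtain ⟨a, b, ha, hb, hab⟩ := h
      obtain ⟨t, ht⟩ := hq_iff x b (by rw [hx, ← hb])
      refine ⟨(σ ^ t) a, ?_, by rw [hq_of, ha]⟩
      rw [← ht]
      exact hadj t b a hab.symm
  -- forward lifting of subwalks
  have hlift2 : ∀ (d i : ℕ), i + d ≤ L → ∀ x : V, q x = C.getVert i →
      ∃ (u : V) (w : X.Walk x u), w.length = d ∧
        ∀ j ≤ d, q (w.getVert j) = C.getVert (i + j) := by
    intro d
    induction d with
    | zero =>
      intro i hi x hx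
      refine ⟨x, SimpleGraph.Walk.nil, rfl, ?_⟩
      intro j hj
      interval_cases j
      simpa using hx
    | succ d ih =>
      intro i hi x hx
      have hadjC : XP.Adj (C.getVert i) (C.getVert (i + 1)) :=
        C.adj_getVert_succ (by omega)
      obtain ⟨y, hxy, hy⟩ := helift _ _ hadjC x hx
      obtain ⟨u, w, hwl, hwp⟩ := ih (i + 1) (by omega) y hy
      refine ⟨u, SimpleGraph.Walk.cons hxy w, by simp [hwl], ?_⟩
      intro j hj
      cases j with
      | zero => simpa using hx
      | succ j =>
        rw [SimpleGraph.Walk.getVert_cons_succ]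
        have h2 := hwp j (by omega)
        rwa [show i + (j + 1) = i + 1 + j by omega]
  -- backward lifting of prefixes
  have hpre : ∀ (i : ℕ), i ≤ L → ∀ x : V, q x = C.getVert i →
      ∃ (v : V) (w : X.Walk v x), w.length = i ∧
        ∀ j ≤ i, q (w.getVert j) = C.getVert j := by
    intro i
    induction i with
    | zero =>
      intro hi x hx
      refine ⟨x, SimpleGraph.Walk.nil, rfl, ?_⟩
      intro j hj
      interval_cases j
      simpa using hx
    | succ i ih =>
      intro hi x hx
      have hadjC : XP.Adj (C.getVert (i + 1)) (C.getVert i) :=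
        (C.adj_getVert_succ (by omega)).symm
      obtain ⟨y, hxy, hy⟩ := helift _ _ hadjC x hx
      obtain ⟨v, w, hwl, hwp⟩ := ih (by omega) y hy
      refine ⟨v, w.append (SimpleGraph.Walk.cons hxy.symm SimpleGraph.Walk.nil),
        by simp [hwl], ?_⟩
      intro j hj
      rw [SimpleGraph.Walk.getVert_append]
      by_cases hji : j < w.length
      · rw [if_pos hji]
        exact hwp j (by omega)
      · rw [if_neg hji]
        rcases (by omega : j = i ∨ j = i + 1) with rfl | rfl
        · have h0 : j - w.length = 0 := by omega
          rw [h0]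
          simpa using hy
        · have h0 : (i + 1) - w.length = 1 := by omega
          rw [h0]
          simpa using hx
  by_cases H : ∃ (x u : V) (w : X.Walk x u), w.length = L ∧
      (∀ j ≤ L, q (w.getVert j) = C.getVert j) ∧ x ≠ u
  · left
    obtain ⟨x, u, w, hwl, hwp, hxu⟩ := H
    have hqx : q x = C.getVert 0 := by
      have h0 := hwp 0 (by omega)
      simpa using h0
    have hqu : q u = C.getVert L := by
      have h2 := hwp L le_rfl
      rw [← hwl] at h2
      rw [SimpleGraph.Walk.getVert_length] at h2
      rwa [hwl] at h2
    have hux : q u = q x := by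
      rw [hqx, hqu, hLdef, SimpleGraph.Walk.getVert_length, SimpleGraph.Walk.getVert_zero]
    obtain ⟨s, hs⟩ := hq_iff u x hux
    have hps : ¬ p ∣ s := by
      rintro ⟨mm, rfl⟩
      exact hxu ((hpowp mm x).symm.trans hs)
    have hwk : w.getVert L = u := by
      rw [← hwl]
      exact SimpleGraph.Walk.getVert_length w
    have chain : ∀ j : ℕ, ∃ W : X.Walk x ((σ ^ (j * s)) x), W.length = j * L ∧
        ∀ a r : ℕ, a < j → r ≤ L → W.getVert (a * L + r) = (σ ^ (a * s)) (w.getVert r) := by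
      intro j
      induction j with
      | zero =>
        refine ⟨(SimpleGraph.Walk.nil : X.Walk x x).copy rfl (by simp), by simp, ?_⟩
        intro a r ha hr
        omega
      | succ j ih =>
        obtain ⟨W, hWl, hWv⟩ := ih
        have hend : (σ ^ (j * s)) u = (σ ^ ((j + 1) * s)) x := by
          rw [← hs, ← Equiv.Perm.mul_apply, ← pow_add]
          congr 2
          ring
        have hend' : (StmtAux.permHom X (σ ^ (j * s)) (hadj (j * s))) u
            = (σ ^ ((j + 1) * s)) x := by
          rw [StmtAux.permHom_apply]
          exact hend
        refine ⟨W.append ((w.map (StmtAux.permHom X (σ ^ (j * s)) (hadj (j * s)))).copy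
          (StmtAux.permHom_apply X (σ ^ (j * s)) (hadj (j * s)) x) hend'), ?_, ?_⟩
        · rw [SimpleGraph.Walk.length_append, SimpleGraph.Walk.length_copy,
            SimpleGraph.Walk.length_map, hWl, hwl, Nat.succ_mul]
        · intro a r ha hr
          rw [SimpleGraph.Walk.getVert_append, hWl]
          by_cases hlt : a * L + r < j * L
          · have haj : a < j := by
              rcases Nat.lt_or_ge a j with h | h
              · exact h
              · have haeq : a = j := by omega
                subst haeq
                omega
            rw [if_pos hlt]
            exact hWv a r haj hr
          · rw [if_neg hlt]
            by_cases haj : a = j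
            · subst haj
              have hidx : a * L + r - a * L = r := by omega
              rw [hidx, SimpleGraph.Walk.getVert_copy, StmtAux.getVert_map,
                StmtAux.permHom_apply]
            · have haj' : a < j := by omega
              have hmul : (a + 1) * L ≤ j * L := Nat.mul_le_mul_right L (by omega)
              have hsucc : (a + 1) * L = a * L + L := Nat.succ_mul a L
              have heq2 : a * L + r = j * L := by omega
              have h3 : j * L = (a + 1) * L := by omega
              have hjeq : j = a + 1 := Nat.eq_of_mul_eq_mul_right (by omega : 0 < L) h3
              subst hjeq
              have hr_eq : r = L := by omega
              subst hr_eq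
              have hidx : a * L + L - (a + 1) * L = 0 := by omega
              rw [hidx, SimpleGraph.Walk.getVert_copy, StmtAux.getVert_map,
                StmtAux.permHom_apply, SimpleGraph.Walk.getVert_zero, hwk]
              rw [← hs, ← Equiv.Perm.mul_apply, ← pow_add]
              congr 2
              ring
    obtain ⟨W, hWl, hWv⟩ := chain p
    have hfix : (σ ^ (p * s)) x = x := hpowp s x
    have hlen' : (W.copy rfl hfix).length = L * p := by
      rw [SimpleGraph.Walk.length_copy, hWl, Nat.mul_comm]
    have hWv' : ∀ i, i < p * L →
        (W.copy rfl hfix).getVert i = (σ ^ ((i / L) * s)) (w.getVert (i % L)) := by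
      intro i hi
      rw [SimpleGraph.Walk.getVert_copy]
      have hrep : (i / L) * L + i % L = i := by
        have h4 := Nat.div_add_mod i L
        rw [Nat.mul_comm] at h4
        exact h4
      have hdivlt : i / L < p := (Nat.div_lt_iff_lt_mul (by omega : 0 < L)).mpr hi
      have h5 := hWv (i / L) (i % L) hdivlt (le_of_lt (Nat.mod_lt _ (by omega)))
      rwa [hrep] at h5
    have hkey : ∀ b b' : ℕ, ∀ z : V, b ≤ b' → b' < p →
        (σ ^ (b * s)) z = (σ ^ (b' * s)) z → b = b' := by
      intro b b' z hbb hb' he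
      have h6 : (σ ^ ((b' - b) * s)) z = z := by
        apply (σ ^ (b * s)).injective
        rw [← Equiv.Perm.mul_apply, ← pow_add,
          show b * s + (b' - b) * s = b' * s by rw [← Nat.add_mul, Nat.add_sub_cancel' hbb]]
        exact he.symm
      have h7 : p ∣ (b' - b) * s := hdvd _ _ h6
      rcases (Nat.Prime.dvd_mul hp).mp h7 with h8 | h8
      · rcases Nat.eq_zero_or_pos (b' - b) with h9 | h9
        · omega
        · exact absurd (Nat.le_of_dvd h9 h8) (by omega)
      · exact absurd h8 hps
    refine ⟨x, W.copy rfl hfix, ?_, hlen', ?_⟩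
    · apply StmtAux.isCycle_of_getVert
      · rw [hlen']
        calc 3 ≤ L := hL3
          _ ≤ L * p := Nat.le_mul_of_pos_right L hp1
      · intro i i' hi hi' heqv
        rw [hlen', Nat.mul_comm] at hi hi'
        rw [hWv' i hi, hWv' i' hi'] at heqv
        have hq1 : C.getVert (i % L) = C.getVert (i' % L) := by
          have h10 := congrArg q heqv
          rwa [hq_of, hq_of, hwp _ (le_of_lt (Nat.mod_lt _ (by omega))),
            hwp _ (le_of_lt (Nat.mod_lt _ (by omega)))] at h10
        have hmm : i % L = i' % L := hcinj _ _ (Nat.mod_lt _ (by omega))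
          (Nat.mod_lt _ (by omega)) hq1
        rw [hmm] at heqv
        have hdiv : i / L = i' / L := by
          have hdl : i / L < p := (Nat.div_lt_iff_lt_mul (by omega : 0 < L)).mpr hi
          have hdl' : i' / L < p := (Nat.div_lt_iff_lt_mul (by omega : 0 < L)).mpr hi'
          rcases Nat.le_total (i / L) (i' / L) with hbb | hbb
          · exact hkey _ _ _ hbb hdl' heqv
          · exact (hkey _ _ _ hbb hdl heqv.symm).symm
        have e1 := Nat.div_add_mod i L
        have e2 := Nat.div_add_mod i' L
        calc i = L * (i / L) + i % L := e1.symm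
          _ = L * (i' / L) + i' % L := by rw [hdiv, hmm]
          _ = i' := e2
    · intro i hi
      rcases Nat.lt_or_ge i (L * p) with hlt | hge
      · have hlt' : i < p * L := by rwa [Nat.mul_comm] at hlt
        rw [hWv' i hlt', hq_of]
        exact hwp (i % L) (le_of_lt (Nat.mod_lt _ (by omega)))
      · have hieq : i = L * p := le_antisymm hi hge
        subst hieq
        have h11 : (W.copy rfl hfix).getVert (L * p) = x := by
          rw [← hlen']
          exact SimpleGraph.Walk.getVert_length _
        rw [h11, Nat.mul_mod_right]
        exact hqx
  · right
    push_neg at H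
    have hfull : ∀ i, i < L → ∀ x y : V, X.Adj x y → q x = C.getVert i →
        q y = C.getVert (i + 1) → ∀ (v u : V) (w1 : X.Walk v x) (w2 : X.Walk y u),
        w1.length = i → (∀ j ≤ i, q (w1.getVert j) = C.getVert j) →
        w2.length = L - (i + 1) →
        (∀ j ≤ L - (i + 1), q (w2.getVert j) = C.getVert (i + 1 + j)) → v = u := by
      intro i hik x y hxy hx hy v u w1 w2 h1l h1p h2l h2p
      apply H v u (w1.append (SimpleGraph.Walk.cons hxy w2))
      · rw [SimpleGraph.Walk.length_append, SimpleGraph.Walk.length_cons, h1l, h2l]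
        omega
      · intro j hj
        rw [SimpleGraph.Walk.getVert_append, h1l]
        by_cases hji : j < i
        · rw [if_pos hji]
          exact h1p j (by omega)
        · rw [if_neg hji]
          cases hd : j - i with
          | zero =>
            have hji2 : j = i := by omega
            simpa [hji2] using hx
          | succ l =>
            rw [SimpleGraph.Walk.getVert_cons_succ]
            have h12 := h2p l (by omega)
            rwa [show i + 1 + l = j by omega] at h12
    refine ⟨?_, ?_, ?_⟩
    · intro v hv
      have hv0 : q v = C.getVert 0 := by rwa [SimpleGraph.Walk.getVert_zero]
      obtain ⟨u, w, hwl, hwp⟩ := hlift2 L 0 (by omega) v hv0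
      have hwp' : ∀ j ≤ L, q (w.getVert j) = C.getVert j := by
        intro j hj
        have h13 := hwp j hj
        rwa [Nat.zero_add] at h13
      have hvu : v = u := H v u w hwl hwp'
      subst hvu
      refine ⟨w, ?_, hwl, hwp'⟩
      apply StmtAux.isCycle_of_getVert
      · rw [hwl]
        exact hL3
      · intro i j hi hj heq
        rw [hwl] at hi hj
        apply hcinj i j hi hj
        rw [← hwp' i (by omega), ← hwp' j (by omega), heq]
    · intro i hik x hx
      obtain ⟨y₀, hxy₀, hy₀⟩ := helift _ _ (C.adj_getVert_succ hik) x hx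
      rw [Set.ncard_eq_one]
      refine ⟨y₀, Set.eq_singleton_iff_unique_mem.mpr ⟨⟨hxy₀, hy₀⟩, ?_⟩⟩
      rintro y ⟨hady, hqy⟩
      obtain ⟨t, ht⟩ := hq_iff y y₀ (by rw [hqy, hy₀])
      obtain ⟨v, w1, h1l, h1p⟩ := hpre i (by omega) x hx
      obtain ⟨u, w2, h2l, h2p⟩ := hlift2 (L - (i + 1)) (i + 1) (by omega) y₀ hy₀
      have e1 : v = u := hfull i hik x y₀ hxy₀ hx hy₀ v u w1 w2 h1l h1p h2l h2p
      have hstart : (StmtAux.permHom X (σ ^ t) (hadj t)) y₀ = y := by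
        rw [StmtAux.permHom_apply]
        exact ht
      have e2 : v = (σ ^ t) u := by
        refine hfull i hik x y hady hx hqy v ((σ ^ t) u) w1
          ((w2.map (StmtAux.permHom X (σ ^ t) (hadj t))).copy hstart
            (StmtAux.permHom_apply X (σ ^ t) (hadj t) u)) h1l h1p ?_ ?_
        · rw [SimpleGraph.Walk.length_copy, SimpleGraph.Walk.length_map]
          exact h2l
        · intro j hj
          rw [SimpleGraph.Walk.getVert_copy, StmtAux.getVert_map, StmtAux.permHom_apply,
            hq_of]
          exact h2p j hj
      rw [e1] at e2
      have hpt : p ∣ t := hdvd t u e2.symm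
      obtain ⟨mm, rfl⟩ := hpt
      rw [← ht, hpowp mm y₀]
    · intro i hik y hy
      obtain ⟨x₀, hyx₀, hx₀⟩ := helift _ _ (C.adj_getVert_succ hik).symm y hy
      rw [Set.ncard_eq_one]
      refine ⟨x₀, Set.eq_singleton_iff_unique_mem.mpr ⟨⟨hyx₀, hx₀⟩, ?_⟩⟩
      rintro x ⟨hadx, hqx⟩
      obtain ⟨t, ht⟩ := hq_iff x x₀ (by rw [hqx, hx₀])
      obtain ⟨v, w1, h1l, h1p⟩ := hpre i (by omega) x₀ hx₀
      obtain ⟨u, w2, h2l, h2p⟩ := hlift2 (L - (i + 1)) (i + 1) (by omega) y hy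
      have e1 : v = u := hfull i hik x₀ y hyx₀.symm hx₀ hy v u w1 w2 h1l h1p h2l h2p
      have hend2 : (StmtAux.permHom X (σ ^ t) (hadj t)) x₀ = x := by
        rw [StmtAux.permHom_apply]
        exact ht
      have e2 : (σ ^ t) v = u := by
        refine hfull i hik x y hadx.symm hqx hy ((σ ^ t) v) u
          ((w1.map (StmtAux.permHom X (σ ^ t) (hadj t))).copy
            (StmtAux.permHom_apply X (σ ^ t) (hadj t) v) hend2) w2 ?_ ?_ h2l h2p
        · rw [SimpleGraph.Walk.length_copy, SimpleGraph.Walk.length_map]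
          exact h1l
        · intro j hj
          rw [SimpleGraph.Walk.getVert_copy, StmtAux.getVert_map, StmtAux.permHom_apply,
            hq_of]
          exact h1p j hj
      rw [e1] at e2
      have hpt : p ∣ t := hdvd t u e2
      obtain ⟨mm, rfl⟩ := hpt
      rw [← ht, hpowp mm x₀]

end StmtAux


/-- **Lifting cycle lemma.** Let `X` be a finite simple graph admitting an `(m, p)`-semiregular
automorphism `ρ`, where `p` is a prime, and let `P` be the set of orbits of `⟨ρ⟩` on `V(X)`
(so every orbit has size `p` and there are `m` orbits). Let `C` be a cycle of length `k` in the
quotient graph `X_P`. Then the lift of `C` either contains a cycle of length `kp` in `X`, or it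
consists of `p` disjoint `k`-cycles of `X`; in the latter case `d(A, A') = 1` for every edge
`AA'` of `C`, i.e. every vertex lying over one endpoint of an edge of `C` has exactly one
neighbour lying over the other endpoint. -/
theorem stmt2 {V : Type*} [Fintype V] [DecidableEq V] (X : SimpleGraph V)
    (ρ : X ≃g X) (m p : ℕ) (hp : p.Prime)
    (horb : ∀ v : V,
      (MulAction.orbit (Subgroup.zpowers (ρ.toEquiv : Equiv.Perm V)) v).ncard = p)
    (hm : Nat.card
      (Quotient (MulAction.orbitRel (Subgroup.zpowers (ρ.toEquiv : Equiv.Perm V)) V)) = m)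
    (XP : SimpleGraph
      (Quotient (MulAction.orbitRel (Subgroup.zpowers (ρ.toEquiv : Equiv.Perm V)) V)))
    (hXP : XP = SimpleGraph.fromRel fun A B => ∃ a b : V,
      Quotient.mk (MulAction.orbitRel (Subgroup.zpowers (ρ.toEquiv : Equiv.Perm V)) V) a = A ∧
      Quotient.mk (MulAction.orbitRel (Subgroup.zpowers (ρ.toEquiv : Equiv.Perm V)) V) b = B ∧
      X.Adj a b)
    (A : Quotient (MulAction.orbitRel (Subgroup.zpowers (ρ.toEquiv : Equiv.Perm V)) V))
    (k : ℕ) (C : XP.Walk A A) (hC : C.IsCycle) (hk : C.length = k) :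
    (∃ (v : V) (w : X.Walk v v), w.IsCycle ∧ w.length = k * p ∧ ∀ i ≤ k * p,
      Quotient.mk (MulAction.orbitRel (Subgroup.zpowers (ρ.toEquiv : Equiv.Perm V)) V)
        (w.getVert i) = C.getVert (i % k)) ∨
    ((∀ v : V,
        Quotient.mk (MulAction.orbitRel (Subgroup.zpowers (ρ.toEquiv : Equiv.Perm V)) V) v = A →
        ∃ w : X.Walk v v, w.IsCycle ∧ w.length = k ∧ ∀ i ≤ k,
          Quotient.mk (MulAction.orbitRel (Subgroup.zpowers (ρ.toEquiv : Equiv.Perm V)) V)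
            (w.getVert i) = C.getVert i) ∧
      (∀ i < k, ∀ x : V,
        Quotient.mk (MulAction.orbitRel (Subgroup.zpowers (ρ.toEquiv : Equiv.Perm V)) V) x =
          C.getVert i →
        (X.neighborSet x ∩ {y : V |
          Quotient.mk (MulAction.orbitRel (Subgroup.zpowers (ρ.toEquiv : Equiv.Perm V)) V) y =
            C.getVert (i + 1)}).ncard = 1) ∧
      (∀ i < k, ∀ y : V,
        Quotient.mk (MulAction.orbitRel (Subgroup.zpowers (ρ.toEquiv : Equiv.Perm V)) V) y =
          C.getVert (i + 1) →
        (X.neighborSet y ∩ {x : V |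
          Quotient.mk (MulAction.orbitRel (Subgroup.zpowers (ρ.toEquiv : Equiv.Perm V)) V) x =
            C.getVert i}).ncard = 1)) := by
  classical
  subst hk
  obtain ⟨hper, hdvd⟩ := StmtAux.aux_period (ρ.toEquiv : Equiv.Perm V) hp horb
  have hp1 : 0 < p := hp.pos
  have hone : (ρ.toEquiv : Equiv.Perm V) ^ p = 1 := Equiv.ext fun v => by simp [hper v]
  have hpowp : ∀ (mm : ℕ) (v : V), ((ρ.toEquiv : Equiv.Perm V) ^ (p * mm)) v = v := by
    intro mm v
    rw [pow_mul, hone, one_pow]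
    rfl
  have σdef : True := trivial
  have hq_of : ∀ (t : ℕ) (v : V), (Quotient.mk (MulAction.orbitRel (Subgroup.zpowers (ρ.toEquiv : Equiv.Perm V)) V)) (((ρ.toEquiv : Equiv.Perm V) ^ t) v) = (Quotient.mk (MulAction.orbitRel (Subgroup.zpowers (ρ.toEquiv : Equiv.Perm V)) V)) v := by
    intro t v
    apply Quotient.sound
    change ((ρ.toEquiv : Equiv.Perm V) ^ t) v ∈ MulAction.orbit (Subgroup.zpowers (ρ.toEquiv : Equiv.Perm V)) v
    exact ⟨⟨(ρ.toEquiv : Equiv.Perm V) ^ t, ⟨(t : ℤ), by simp⟩⟩, rfl⟩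
  have hq_iff : ∀ a b : V, (Quotient.mk (MulAction.orbitRel (Subgroup.zpowers (ρ.toEquiv : Equiv.Perm V)) V)) a = (Quotient.mk (MulAction.orbitRel (Subgroup.zpowers (ρ.toEquiv : Equiv.Perm V)) V)) b → ∃ t : ℕ, ((ρ.toEquiv : Equiv.Perm V) ^ t) b = a := by
    intro a b h
    have h' : a ∈ MulAction.orbit (Subgroup.zpowers (ρ.toEquiv : Equiv.Perm V)) b := by
      rw [← MulAction.orbitRel_apply]
      exact Quotient.exact h
    obtain ⟨g, hg⟩ := h'
    obtain ⟨n, hn⟩ := Subgroup.mem_zpowers_iff.mp g.2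
    refine ⟨(n % (p : ℤ)).toNat, ?_⟩
    have h2 : ((ρ.toEquiv : Equiv.Perm V) ^ n) b = a := by rw [hn]; exact hg
    rwa [StmtAux.aux_zpow_eq (ρ.toEquiv : Equiv.Perm V) hp1 hone n] at h2
  have hadj1 : ∀ a b : V, X.Adj a b → X.Adj ((ρ.toEquiv : Equiv.Perm V) a) ((ρ.toEquiv : Equiv.Perm V) b) := by
    intro a b h
    exact ρ.map_adj_iff.mpr h
  have hadj : ∀ (t : ℕ) (a b : V), X.Adj a b → X.Adj (((ρ.toEquiv : Equiv.Perm V) ^ t) a) (((ρ.toEquiv : Equiv.Perm V) ^ t) b) := by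
    intro t
    induction t with
    | zero => intro a b h; simpa using h
    | succ n ih =>
      intro a b h
      have h2 := hadj1 _ _ (ih a b h)
      rw [pow_succ']
      simpa [Equiv.Perm.mul_apply] using h2
  have hXPadj : ∀ B B', XP.Adj B B' →
      (∃ a b : V, (Quotient.mk (MulAction.orbitRel (Subgroup.zpowers (ρ.toEquiv : Equiv.Perm V)) V)) a = B ∧ (Quotient.mk (MulAction.orbitRel (Subgroup.zpowers (ρ.toEquiv : Equiv.Perm V)) V)) b = B' ∧ X.Adj a b) ∨
      (∃ a b : V, (Quotient.mk (MulAction.orbitRel (Subgroup.zpowers (ρ.toEquiv : Equiv.Perm V)) V)) a = B' ∧ (Quotient.mk (MulAction.orbitRel (Subgroup.zpowers (ρ.toEquiv : Equiv.Perm V)) V)) b = B ∧ X.Adj a b) := by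
    intro B B' hBB'
    rw [hXP, SimpleGraph.fromRel_adj] at hBB'
    exact hBB'.2
  exact StmtAux.stmt2_aux X (Quotient.mk (MulAction.orbitRel (Subgroup.zpowers (ρ.toEquiv : Equiv.Perm V)) V)) (ρ.toEquiv : Equiv.Perm V) p hp hpowp hdvd hq_of hq_iff hadj XP hXPadj A C hC
end

section
/- With the setup below, the subgroup S of PSL(2, k) acts freely on the projective line PG(1, k) and has exactly two orbits on PG(1, k), each of size (k+1)/2; moreover the point ∞ is not contained in the S-orbit containing 0. -/
/-! Identify `F²` with `F(√θ)` via `(x, y) ↦ y + x √θ`; then `s(a, b)` is multiplication by the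
norm-one element `a + b √θ`, so the square class of the norm form `y² - θ x²` is constant on
`S`-orbits. As `θ` is a non-square and `-1` a square, the norm is a nonzero square exactly on the
orbit of `0` and a non-square exactly on the orbit of `∞`, so these two orbits partition the line.
The map `[x : y] ↦ [y : θ x]` multiplies the norm by `-θ`, hence swaps the orbits and shows they
have equal size. Freeness: an eigenvector of `s(a, b)` with eigenvalue `c` forces
`(c - a)² = b² θ`, so `b = 0` and `s(a, b) = ±1`. -/

open Matrix
open scoped MatrixGroups

namespace Paper6

variable {F : Type*} [Field F]

/-- The natural projection `SL(2, F) → PSL(2, F)`. -/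
def pr (F : Type*) [Field F] : SL(2, F) →* PSL(2, F) := QuotientGroup.mk' _

/-- The element `s(a, b)`, i.e. the image of `[[a, b], [bθ, a]]`, in `SL(2, F)`,
where `a ^ 2 - b ^ 2 * θ = 1`. -/
def smat (θ a b : F) (h : a ^ 2 - b ^ 2 * θ = 1) : SL(2, F) :=
  ⟨!![a, b; b * θ, a], by rw [Matrix.det_fin_two_of]; linear_combination h⟩

/-- The natural (Möbius) action of `SL(2, F)` on the projective line `PG(1, F)`,
realized as the projectivization of `F²`. -/
def pact (g : SL(2, F)) :
    Projectivization F (Fin 2 → F) → Projectivization F (Fin 2 → F) :=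
  Projectivization.map (Matrix.mulVecLin (g : Matrix (Fin 2) (Fin 2) F))
    (by
      have key : ∀ v : Fin 2 → F,
          ((g⁻¹ : SL(2, F)) : Matrix (Fin 2) (Fin 2) F).mulVec
            (((g : Matrix (Fin 2) (Fin 2) F)).mulVec v) = v := by
        intro v
        rw [Matrix.mulVec_mulVec, ← Matrix.SpecialLinearGroup.coe_mul, inv_mul_cancel g]
        simp
      intro x y hxy
      have h2 := congrArg
        (fun v => ((g⁻¹ : SL(2, F)) : Matrix (Fin 2) (Fin 2) F).mulVec v) hxy
      simp only [Matrix.mulVecLin_apply] at h2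
      rwa [key x, key y] at h2)

/-- The point `∞ = [1 : 0]` of the projective line. -/
def pinf (F : Type*) [Field F] : Projectivization F (Fin 2 → F) :=
  Projectivization.mk F ![1, 0] (by
    intro h
    simpa using congrFun h 0)

/-- The point `0 = [0 : 1]` of the projective line. -/
def pzero (F : Type*) [Field F] : Projectivization F (Fin 2 → F) :=
  Projectivization.mk F ![0, 1] (by
    intro h
    simpa using congrFun h 1)

/-- The `S`-orbit of a point of the projective line, where
`S = {s(a, b) : a² - b² θ = 1}`. -/
def orbS (θ : F) (x : Projectivization F (Fin 2 → F)) : Set (Projectivization F (Fin 2 → F)) :=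
  {y | ∃ (a b : F) (h : a ^ 2 - b ^ 2 * θ = 1), y = pact (smat θ a b h) x}

open Projectivization
open scoped LinearAlgebra.Projectivization

lemma mulVec_ne_zero (g : SL(2, F)) {v : Fin 2 → F} (hv : v ≠ 0) :
    (g : Matrix (Fin 2) (Fin 2) F) *ᵥ v ≠ 0 := by
  have hinj := Matrix.mulVec_injective_iff_isUnit.mpr <|
    (Matrix.isUnit_iff_isUnit_det (g : Matrix (Fin 2) (Fin 2) F)).mpr (by simp)
  simpa only [Matrix.mulVec_zero] using hinj.ne hv

lemma pact_mk (g : SL(2, F)) {v : Fin 2 → F} (hv : v ≠ 0) :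
    pact g (mk F v hv) = mk F ((g : Matrix (Fin 2) (Fin 2) F) *ᵥ v) (mulVec_ne_zero g hv) :=
  rfl

lemma mulVec_fin_two {R : Type*} [NonUnitalNonAssocSemiring R] (a b c d : R) (v : Fin 2 → R) :
    !![a, b; c, d] *ᵥ v = ![a * v 0 + b * v 1, c * v 0 + d * v 1] := by
  ext i; fin_cases i <;> simp [Matrix.mulVec, dotProduct, Fin.sum_univ_two]

lemma smat_mulVec (θ a b : F) (h : a ^ 2 - b ^ 2 * θ = 1) (v : Fin 2 → F) :
    (smat θ a b h : Matrix (Fin 2) (Fin 2) F) *ᵥ v = ![a * v 0 + b * v 1, b * θ * v 0 + a * v 1] :=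
  mulVec_fin_two _ _ _ _ v

def normForm (θ : F) (v : Fin 2 → F) : F := v 1 ^ 2 - θ * v 0 ^ 2

lemma normForm_smul (θ c : F) (v : Fin 2 → F) : normForm θ (c • v) = c ^ 2 * normForm θ v := by
  simp only [normForm, Pi.smul_apply, smul_eq_mul]; ring

lemma normForm_ne_zero {θ : F} (hθ : ¬IsSquare θ) {v : Fin 2 → F} (hv : v ≠ 0) :
    normForm θ v ≠ 0 := by
  intro h0
  unfold normForm at h0
  by_cases hx : v 0 = 0
  · have hy : v 1 = 0 := by simpa [hx] using h0
    exact hv (by ext i; fin_cases i <;> assumption)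
  · exact hθ ⟨v 1 / v 0, by field_simp; linear_combination -h0⟩

lemma mk_mem_orbS_pzero_iff {θ : F} (hθ : ¬IsSquare θ) {v : Fin 2 → F} (hv : v ≠ 0) :
    mk F v hv ∈ orbS θ (pzero F) ↔ IsSquare (normForm θ v) := by
  constructor
  · rintro ⟨a, b, h, heq⟩
    rw [pzero, pact_mk, mk_eq_mk_iff'] at heq
    obtain ⟨c, rfl⟩ := heq
    refine ⟨c, ?_⟩
    rw [normForm_smul, smat_mulVec, normForm]
    simp only [cons_val_zero, cons_val_one, cons_val_fin_one]
    linear_combination c ^ 2 * h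
  · rintro ⟨e, he⟩
    have he0 : e ≠ 0 := by rintro rfl; exact normForm_ne_zero hθ hv (by simpa using he)
    unfold normForm at he
    refine ⟨v 1 / e, v 0 / e, by field_simp; linear_combination he, ?_⟩
    rw [pzero, pact_mk, mk_eq_mk_iff']
    refine ⟨e, ?_⟩
    rw [smat_mulVec]
    ext i; fin_cases i <;> simp <;> field_simp

lemma mk_mem_orbS_pinf_iff {θ : F} (hθ : ¬IsSquare θ) {v : Fin 2 → F} (hv : v ≠ 0) :
    mk F v hv ∈ orbS θ (pinf F) ↔ IsSquare (-θ * normForm θ v) := by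
  have hθ0 : θ ≠ 0 := by rintro rfl; exact hθ ⟨0, by simp⟩
  constructor
  · rintro ⟨a, b, h, heq⟩
    rw [pinf, pact_mk, mk_eq_mk_iff'] at heq
    obtain ⟨c, rfl⟩ := heq
    refine ⟨c * θ, ?_⟩
    rw [normForm_smul, smat_mulVec, normForm]
    simp only [cons_val_zero, cons_val_one, cons_val_fin_one]
    linear_combination θ ^ 2 * c ^ 2 * h
  · rintro ⟨e, he⟩
    have he0 : e ≠ 0 := by
      rintro rfl
      exact mul_ne_zero (neg_ne_zero.mpr hθ0) (normForm_ne_zero hθ hv) (by simpa using he)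
    unfold normForm at he
    refine ⟨θ * v 0 / e, v 1 / e, by field_simp; linear_combination he, ?_⟩
    rw [pinf, pact_mk, mk_eq_mk_iff']
    refine ⟨e / θ, ?_⟩
    rw [smat_mulVec]
    ext i; fin_cases i <;> simp <;> field_simp

lemma not_isSquare_neg {θ : F} (hθ : ¬IsSquare θ) (hneg : IsSquare (-1 : F)) :
    ¬IsSquare (-θ) := fun h => hθ (by simpa using hneg.mul h)

lemma disjoint_orbS_pinf_orbS_pzero {θ : F} (hθ : ¬IsSquare θ) (hneg : IsSquare (-1 : F)) :
    Disjoint (orbS θ (pinf F)) (orbS θ (pzero F)) := by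
  rw [Set.disjoint_left]
  intro p
  induction p using Projectivization.ind with
  | h v hv =>
  rw [mk_mem_orbS_pinf_iff hθ hv, mk_mem_orbS_pzero_iff hθ hv]
  intro hinf hzero
  refine not_isSquare_neg hθ hneg ?_
  simpa only [mul_div_cancel_right₀ _ (normForm_ne_zero hθ hv)] using hinf.div hzero

lemma FiniteField.isSquare_or_isSquare_mul [Fintype F] {θ d : F} (hθ : ¬IsSquare θ) (hd : d ≠ 0) :
    IsSquare d ∨ IsSquare (θ * d) := by
  classical
  have hθ0 : θ ≠ 0 := by rintro rfl; exact hθ ⟨0, by simp⟩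
  rw [← quadraticChar_one_iff_isSquare hd, ← quadraticChar_one_iff_isSquare (mul_ne_zero hθ0 hd),
    map_mul, quadraticChar_neg_one_iff_not_isSquare.mpr hθ]
  rcases quadraticChar_dichotomy hd with h | h <;> simp [h]

lemma orbS_pinf_union_orbS_pzero [Fintype F] {θ : F} (hθ : ¬IsSquare θ)
    (hneg : IsSquare (-1 : F)) : orbS θ (pinf F) ∪ orbS θ (pzero F) = Set.univ := by
  refine Set.eq_univ_of_forall fun p => ?_
  induction p using Projectivization.ind with
  | h v hv =>
  rw [Set.mem_union, mk_mem_orbS_pinf_iff hθ hv, mk_mem_orbS_pzero_iff hθ hv]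
  exact (FiniteField.isSquare_or_isSquare_mul (not_isSquare_neg hθ hneg)
    (normForm_ne_zero hθ hv)).symm

lemma normForm_swap (θ : F) (v : Fin 2 → F) :
    normForm θ (!![0, 1; θ, 0] *ᵥ v) = -θ * normForm θ v := by
  rw [normForm, normForm, mulVec_fin_two]
  simp only [cons_val_zero, cons_val_one, cons_val_fin_one]
  ring

lemma ncard_orbS_pinf_eq_ncard_orbS_pzero [Finite F] {θ : F} (hθ : ¬IsSquare θ) :
    (orbS θ (pinf F)).ncard = (orbS θ (pzero F)).ncard := by
  have hθ0 : θ ≠ 0 := by rintro rfl; exact hθ ⟨0, by simp⟩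
  have hinj : Function.Injective (!![0, 1; θ, 0] : Matrix (Fin 2) (Fin 2) F).mulVecLin :=
    Matrix.mulVec_injective_iff_isUnit.mpr <|
      (Matrix.isUnit_iff_isUnit_det _).mpr (by simpa [det_fin_two_of] using hθ0)
  set σ := Projectivization.map _ hinj with hσ_def
  have hσ_inf : ∀ p ∈ orbS θ (pinf F), σ p ∈ orbS θ (pzero F) := by
    intro p
    induction p using Projectivization.ind with
    | h v hv =>
    rw [mk_mem_orbS_pinf_iff hθ hv, hσ_def, map_mk, mk_mem_orbS_pzero_iff hθ, mulVecLin_apply,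
      normForm_swap]
    exact id
  have hσ_zero : ∀ p ∈ orbS θ (pzero F), σ p ∈ orbS θ (pinf F) := by
    intro p
    induction p using Projectivization.ind with
    | h v hv =>
    rw [mk_mem_orbS_pzero_iff hθ hv, hσ_def, map_mk, mk_mem_orbS_pinf_iff hθ, mulVecLin_apply,
      normForm_swap, ← mul_assoc, neg_mul_neg]
    exact IsSquare.mul ⟨θ, rfl⟩
  have hσ := map_injective _ hinj
  exact le_antisymm (Set.ncard_le_ncard_of_injOn σ hσ_inf hσ.injOn)
    (Set.ncard_le_ncard_of_injOn σ hσ_zero hσ.injOn)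

lemma sq_sub_eq_of_smat_mulVec_eq_smul {θ a b c : F} (h : a ^ 2 - b ^ 2 * θ = 1)
    {v : Fin 2 → F} (hv : v ≠ 0) (hc : c • v = (smat θ a b h : Matrix (Fin 2) (Fin 2) F) *ᵥ v) :
    (c - a) ^ 2 = b ^ 2 * θ := by
  rw [smat_mulVec] at hc
  have h0 : c * v 0 = a * v 0 + b * v 1 := by simpa using congrFun hc 0
  have h1 : c * v 1 = b * θ * v 0 + a * v 1 := by simpa using congrFun hc 1
  have hzero : ((c - a) ^ 2 - b ^ 2 * θ) • v = 0 := by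
    funext i; fin_cases i
    · show ((c - a) ^ 2 - b ^ 2 * θ) * v 0 = 0
      linear_combination (c - a) * h0 + b * h1
    · show ((c - a) ^ 2 - b ^ 2 * θ) * v 1 = 0
      linear_combination (c - a) * h1 + b * θ * h0
  exact sub_eq_zero.mp ((smul_eq_zero.mp hzero).resolve_right hv)

lemma smat_zero_mem_center (θ a : F) (h : a ^ 2 - 0 ^ 2 * θ = 1) :
    smat θ a 0 h ∈ Subgroup.center SL(2, F) := by
  rw [Matrix.SpecialLinearGroup.mem_center_iff]
  refine ⟨a, by simpa using h, ?_⟩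
  ext i j; fin_cases i <;> fin_cases j <;> simp [smat]

lemma pact_smat_ne_self {θ a b : F} (hθ : ¬IsSquare θ) (h : a ^ 2 - b ^ 2 * θ = 1)
    (hpr : pr F (smat θ a b h) ≠ 1) (x : ℙ F (Fin 2 → F)) : pact (smat θ a b h) x ≠ x := by
  rcases eq_or_ne b 0 with rfl | hb
  · exact absurd ((QuotientGroup.eq_one_iff _).mpr (smat_zero_mem_center θ a h)) hpr
  induction x using Projectivization.ind with
  | h v hv =>
  rw [pact_mk, Ne, mk_eq_mk_iff']
  rintro ⟨c, hc⟩
  have hsq := sq_sub_eq_of_smat_mulVec_eq_smul h hv hc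
  exact hθ ⟨(c - a) / b, by field_simp; linear_combination -hsq⟩

lemma not_isSquare_of_forall_mem_zpowers [Fintype F] (hF : ringChar F ≠ 2) {θ : Fˣ}
    (hθ : ∀ x : Fˣ, x ∈ Subgroup.zpowers θ) : ¬IsSquare (θ : F) := by
  rintro ⟨r, hr⟩
  have hr0 : r ≠ 0 := by rintro rfl; simp at hr
  have hθsq : IsSquare θ := ⟨Units.mk0 r hr0, Units.ext (by simpa using hr)⟩
  obtain ⟨d, hd⟩ := FiniteField.exists_nonsquare hF
  have hd0 : d ≠ 0 := by rintro rfl; exact hd ⟨0, by simp⟩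
  obtain ⟨n, hn⟩ := Subgroup.mem_zpowers_iff.mp (hθ (Units.mk0 d hd0))
  apply hd
  simpa [hn] using (hθsq.zpow n).map (Units.coeHom F)

/-- The subgroup `S` of `PSL(2, k)` acts freely on the projective line `PG(1, k)` and has
exactly two orbits on `PG(1, k)`, each of size `(k+1)/2`; moreover the point `∞` is not
contained in the `S`-orbit containing `0`. -/
theorem stmt6 [Fintype F] (k : ℕ) (hcard : Fintype.card F = k) (hk4 : k % 4 = 1)
    (θ : Fˣ) (hθ : ∀ x : Fˣ, x ∈ Subgroup.zpowers θ) :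
    (∀ (a b : F) (h : a ^ 2 - b ^ 2 * (θ : F) = 1),
      pr F (smat (θ : F) a b h) ≠ 1 →
      ∀ x : Projectivization F (Fin 2 → F), pact (smat (θ : F) a b h) x ≠ x) ∧
    (orbS (θ : F) (pinf F)).ncard = (k + 1) / 2 ∧
    (orbS (θ : F) (pzero F)).ncard = (k + 1) / 2 ∧
    orbS (θ : F) (pinf F) ∪ orbS (θ : F) (pzero F) = Set.univ ∧
    pinf F ∉ orbS (θ : F) (pzero F) := by
  have hchar : ringChar F ≠ 2 := fun h2 => by
    have := FiniteField.even_card_of_char_two h2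
    omega
  have hsq : ¬IsSquare (θ : F) := not_isSquare_of_forall_mem_zpowers hchar hθ
  have hneg : IsSquare (-1 : F) := FiniteField.isSquare_neg_one_iff.mpr (by omega)
  have hunion := orbS_pinf_union_orbS_pzero hsq hneg
  have hdisj := disjoint_orbS_pinf_orbS_pzero hsq hneg
  have hsum : (orbS (θ : F) (pinf F)).ncard + (orbS (θ : F) (pzero F)).ncard = k + 1 := by
    rw [← Set.ncard_union_eq hdisj, hunion, Set.ncard_univ,
      card_of_finrank_two F _ (Module.finrank_fin_fun F), Nat.card_eq_fintype_card, hcard]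
  have hpinf : pinf F ∈ orbS (θ : F) (pinf F) :=
    (mk_mem_orbS_pinf_iff hsq _).mpr ⟨θ, by simp [normForm]⟩
  have heq := ncard_orbS_pinf_eq_ncard_orbS_pzero hsq
  exact ⟨fun a b h => pact_smat_ne_self hsq h, by omega, by omega, hunion,
    Set.disjoint_left.mp hdisj hpinf⟩

end Paper6
end

section
/- Let q be a prime power with 10 dividing q − 1, and let c ∈ F_q^*. Then the number N of pairs (a, y) ∈ F_q × F_q with a^2 + c y^{10} = 1 and y ≠ 0 satisfies N ≥ q − 8√q − 3. In particular, if q ≥ 72 then there exists a pair (a, y) ∈ F_q × F_q with y ≠ 0 and a^2 + c y^{10} = 1. -/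
/-!
Let `ψ` be a multiplicative character of order `2m` on `F_q` and `η = ψ^m` the quadratic
character. Counting square roots with `η` and `2m`-th roots with the powers of `ψ` turns the
number of points of `a² + c y^{2m} = 1` with `y ≠ 0` into `q - 2 + ∑_{0<j<2m} ψ^j(c⁻¹) J(ψ^j, η)`.
All these Jacobi sums have absolute value `√q`, except `J(η, η) = -η(-1)`, whence
`|N - (q - 2)| ≤ 1 + (2m - 2)√q`; for `m = 5` this is the claimed bound.
-/

open Finset

namespace MulChar

variable {F : Type*} [Field F] [Fintype F]

theorem exists_pow_orderOf_eq_of_apply_eq_one {R : Type*} [CommMonoidWithZero R]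
    (ψ : MulChar F R) {u : F} (hu : u ≠ 0) (h : ψ u = 1) : ∃ y, y ^ orderOf ψ = u := by
  obtain ⟨g, hg⟩ := IsCyclic.exists_generator (α := Fˣ)
  obtain ⟨k, hk : g ^ k = Units.mk0 u hu⟩ := mem_powers_iff_mem_zpowers.mpr (hg (Units.mk0 u hu))
  have hψk : ψ ^ k = 1 := by
    rw [MulChar.eq_iff hg, pow_apply_coe, one_apply_coe, ← map_pow, ← Units.val_pow_eq_pow_val,
      hk, Units.val_mk0, h]
  obtain ⟨t, rfl⟩ := orderOf_dvd_of_pow_eq_one hψk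
  exact ⟨(g ^ t : Fˣ), by rw [← Units.val_pow_eq_pow_val, ← pow_mul, mul_comm, hk, Units.val_mk0]⟩

theorem exists_isPrimitiveRoot_orderOf {R : Type*} [CommRing R] (ψ : MulChar F R) :
    ∃ ζ : F, IsPrimitiveRoot ζ (orderOf ψ) := by
  obtain ⟨g, hg⟩ := IsCyclic.exists_generator (α := Fˣ)
  have hg' : IsPrimitiveRoot g (Fintype.card F - 1) := by
    rw [← Nat.card_eq_fintype_card, ← Nat.card_units, ← orderOf_eq_card_of_forall_mem_zpowers hg]
    exact IsPrimitiveRoot.orderOf g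
  have hdvd := orderOf_dvd_card_sub_one F ψ
  have hq : 0 < Fintype.card F - 1 := Nat.sub_pos_of_lt Fintype.one_lt_card
  refine ⟨(g ^ ((Fintype.card F - 1) / orderOf ψ) : Fˣ), IsPrimitiveRoot.coe_units_iff.mpr ?_⟩
  have := hg'.pow_of_dvd (Nat.div_pos (Nat.le_of_dvd hq hdvd) ψ.orderOf_pos).ne'
    (Nat.div_dvd_of_dvd hdvd)
  rwa [Nat.div_div_self hdvd hq.ne'] at this

/-- For `u ≠ 0` the right side is a geometric sum of the root of unity `ψ u`, which vanishes
exactly when `u` is not an `orderOf ψ`-th power; at `u = 0` it is `0 ^ 0 = 1`. -/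
theorem card_pow_orderOf_eq [DecidableEq F] (ψ : MulChar F ℂ) (u : F) :
    (#{y | y ^ orderOf ψ = u} : ℂ) = ∑ j ∈ range (orderOf ψ), ψ u ^ j := by
  set d := orderOf ψ
  have hd : 0 < d := ψ.orderOf_pos
  rcases eq_or_ne u 0 with rfl | hu
  · have : ({y | y ^ d = 0} : Finset F) = {0} := by
      ext y; simp [pow_eq_zero_iff hd.ne']
    rw [this, ψ.map_nonunit not_isUnit_zero, card_singleton,
      Finset.sum_eq_single 0 (fun j _ hj => zero_pow hj) (by simp [hd])]
    simp
  obtain ⟨ζ, hζ⟩ := ψ.exists_isPrimitiveRoot_orderOf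
  have hcard : #{y | y ^ d = u} = if ∃ y, y ^ d = u then d else 0 := by
    have : ({y | y ^ d = u} : Finset F) = (Polynomial.nthRoots d u).toFinset := by
      ext y; simp [Polynomial.mem_nthRoots hd]
    rw [this, Multiset.toFinset_card_of_nodup (hζ.nthRoots_nodup hu)]
    convert hζ.card_nthRoots u
  by_cases hex : ∃ y, y ^ d = u
  · obtain ⟨y, rfl⟩ := hex
    have hy : y ≠ 0 := by rintro rfl; exact hu (zero_pow hd.ne')
    rw [hcard, if_pos ⟨y, rfl⟩, map_pow, ← pow_apply' ψ hd.ne', pow_orderOf_eq_one,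
      one_apply hy.isUnit]
    simp
  · have hψu : ψ u ≠ 1 := fun h => hex (ψ.exists_pow_orderOf_eq_of_apply_eq_one hu h)
    rw [hcard, if_neg hex, geom_sum_eq hψu, ← pow_apply' ψ hd.ne', pow_orderOf_eq_one,
      one_apply hu.isUnit]
    simp

theorem norm_apply_eq_one (χ : MulChar F ℂ) {x : F} (hx : x ≠ 0) : ‖χ x‖ = 1 := by
  refine Complex.norm_eq_one_of_pow_eq_one (n := Fintype.card F - 1) ?_
    (Nat.sub_pos_of_lt Fintype.one_lt_card).ne'
  rw [← map_pow, FiniteField.pow_card_sub_one_eq_one x hx, map_one]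

theorem sum_apply_one_sub_mul_eq_zero {R : Type*} [CommRing R] [IsDomain R] {χ : MulChar F R}
    (hχ : χ ≠ 1) {c : F} (hc : c ≠ 0) : ∑ u, χ (1 - c * u) = 0 := by
  have hbij : Function.Bijective fun u : F => 1 - c * u :=
    Finite.injective_iff_bijective.mp fun u v h => mul_left_cancel₀ hc (by linear_combination -h)
  rw [Fintype.sum_bijective _ hbij _ χ fun _ => rfl, sum_eq_zero_of_ne_one hχ]

end MulChar

section JacobiSum

variable {F : Type*} [Field F] [Fintype F]

theorem star_jacobiSum (χ φ : MulChar F ℂ) : star (jacobiSum χ φ) = jacobiSum χ⁻¹ φ⁻¹ := by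
  simp only [jacobiSum, star_sum, star_mul', MulChar.star_apply']

theorem norm_jacobiSum {χ φ : MulChar F ℂ} (hχ : χ ≠ 1) (hφ : φ ≠ 1) (hχφ : χ * φ ≠ 1) :
    ‖jacobiSum χ φ‖ = √(Fintype.card F) := by
  have hchar : ringChar ℂ ≠ ringChar F := by
    rw [ringChar.eq_zero]; exact (CharP.ringChar_ne_zero_of_finite F).symm
  have h := congrArg norm (jacobiSum_mul_jacobiSum_inv hchar hχ hφ hχφ)
  rw [norm_mul, ← star_jacobiSum, norm_star, Complex.norm_natCast, ← sq] at h
  rw [← h, Real.sqrt_sq (norm_nonneg _)]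

theorem sum_mulChar_mul_apply_one_sub_mul {R : Type*} [CommRing R] (χ φ : MulChar F R) {c : F}
    (hc : c ≠ 0) : ∑ u, χ u * φ (1 - c * u) = χ c⁻¹ * jacobiSum χ φ := by
  rw [jacobiSum, mul_sum, ← Equiv.sum_comp (Equiv.mulLeft₀ c⁻¹ (inv_ne_zero hc))]
  refine sum_congr rfl fun w _ => ?_
  simp only [Equiv.mulLeft₀_apply, map_mul, mul_inv_cancel_left₀ hc]
  ring

section CharacterOfEvenOrder

variable {m : ℕ} {ψ : MulChar F ℂ}

theorem pos_of_orderOf_eq_two_mul (hψ : orderOf ψ = 2 * m) : 0 < m := by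
  have := ψ.orderOf_pos
  omega

theorem norm_sum_jacobiSum_le (hψ : orderOf ψ = 2 * m) {c : F} (hc : c ≠ 0) :
    ‖∑ j ∈ Ico 1 (2 * m), (ψ ^ j) c⁻¹ * jacobiSum (ψ ^ j) (ψ ^ m)‖ ≤
      1 + (2 * m - 2) * √(Fintype.card F) := by
  have hm := pos_of_orderOf_eq_two_mul hψ
  have hη : ψ ^ m ≠ 1 := pow_ne_one_of_lt_orderOf hm.ne' (by omega)
  have hnorm (j : ℕ) :
      ‖(ψ ^ j) c⁻¹ * jacobiSum (ψ ^ j) (ψ ^ m)‖ = ‖jacobiSum (ψ ^ j) (ψ ^ m)‖ := by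
    rw [norm_mul, MulChar.norm_apply_eq_one _ (inv_ne_zero hc), one_mul]
  have hmid : ‖jacobiSum (ψ ^ m) (ψ ^ m)‖ = 1 := by
    have hinv : (ψ ^ m)⁻¹ = ψ ^ m :=
      inv_eq_of_mul_eq_one_right (by rw [← pow_add, ← two_mul, ← hψ, pow_orderOf_eq_one])
    have : jacobiSum (ψ ^ m) (ψ ^ m) = jacobiSum (ψ ^ m) (ψ ^ m)⁻¹ := by rw [hinv]
    rw [this, jacobiSum_nontrivial_inv hη, norm_neg,
      MulChar.norm_apply_eq_one _ (neg_ne_zero.mpr one_ne_zero)]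
  have hgen : ∀ j ∈ (Ico 1 (2 * m)).erase m,
      ‖jacobiSum (ψ ^ j) (ψ ^ m)‖ = √(Fintype.card F) := by
    intro j hj
    simp only [mem_erase, mem_Ico] at hj
    refine norm_jacobiSum (pow_ne_one_of_lt_orderOf (by omega) (by omega)) hη ?_
    rw [← pow_add]
    intro h
    have := Nat.eq_of_dvd_of_lt_two_mul (by omega) (hψ ▸ orderOf_dvd_of_pow_eq_one h) (by omega)
    omega
  have hcard : (#((Ico 1 (2 * m)).erase m) : ℝ) = 2 * m - 2 := by
    rw [card_erase_of_mem (by simp; omega), Nat.card_Ico,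
      show 2 * m - 1 - 1 = 2 * m - 2 by omega, Nat.cast_sub (by omega)]
    push_cast
    ring
  calc ‖∑ j ∈ Ico 1 (2 * m), (ψ ^ j) c⁻¹ * jacobiSum (ψ ^ j) (ψ ^ m)‖
      ≤ ∑ j ∈ Ico 1 (2 * m), ‖jacobiSum (ψ ^ j) (ψ ^ m)‖ :=
        (norm_sum_le _ _).trans_eq (sum_congr rfl fun j _ => hnorm j)
    _ = 1 + (2 * m - 2) * √(Fintype.card F) := by
        rw [← add_sum_erase _ _ (by simp; omega : m ∈ Ico 1 (2 * m)), hmid, sum_congr rfl hgen,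
          sum_const, nsmul_eq_mul, hcard]

variable [DecidableEq F]

theorem card_sq_eq_one_add (hψ : orderOf ψ = 2 * m) (v : F) :
    (#{a | a ^ 2 = v} : ℂ) = 1 + (ψ ^ m) v := by
  have hm := pos_of_orderOf_eq_two_mul hψ
  have h2 : orderOf (ψ ^ m) = 2 := by
    rw [orderOf_pow_of_dvd hm.ne' (hψ ▸ dvd_mul_left m 2), hψ, Nat.mul_div_cancel _ hm]
  rw [← h2, MulChar.card_pow_orderOf_eq, h2, sum_range_succ, sum_range_one, pow_zero, pow_one]

theorem sum_apply_one_sub_mul_pow_eq_sum_jacobiSum (hψ : orderOf ψ = 2 * m) {c : F} (hc : c ≠ 0) :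
    ∑ y, (ψ ^ m) (1 - c * y ^ (2 * m)) =
      ∑ j ∈ Ico 1 (2 * m), (ψ ^ j) c⁻¹ * jacobiSum (ψ ^ j) (ψ ^ m) := by
  have hm := pos_of_orderOf_eq_two_mul hψ
  have hη : ψ ^ m ≠ 1 := pow_ne_one_of_lt_orderOf hm.ne' (by omega)
  calc ∑ y, (ψ ^ m) (1 - c * y ^ (2 * m))
      = ∑ u, (#{y | y ^ (2 * m) = u} : ℂ) * (ψ ^ m) (1 - c * u) := by
        rw [← sum_fiberwise' univ (· ^ (2 * m)) fun u => (ψ ^ m) (1 - c * u)]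
        simp only [sum_const, nsmul_eq_mul]
    _ = ∑ j ∈ range (2 * m), ∑ u, ψ u ^ j * (ψ ^ m) (1 - c * u) := by
        simp only [← hψ, MulChar.card_pow_orderOf_eq, sum_mul]
        exact sum_comm
    _ = ∑ j ∈ Ico 1 (2 * m), (ψ ^ j) c⁻¹ * jacobiSum (ψ ^ j) (ψ ^ m) := by
        rw [range_eq_Ico, sum_eq_sum_Ico_succ_bot (by omega)]
        simp only [pow_zero, one_mul, MulChar.sum_apply_one_sub_mul_eq_zero hη hc, zero_add]
        refine sum_congr rfl fun j hj => ?_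
        rw [← sum_mulChar_mul_apply_one_sub_mul _ _ hc]
        simp only [MulChar.pow_apply' ψ (n := j) (by simp at hj; omega)]

theorem card_sq_add_mul_pow_eq_one (hψ : orderOf ψ = 2 * m) {c : F} (hc : c ≠ 0) :
    (#{p : F × F | p.1 ^ 2 + c * p.2 ^ (2 * m) = 1 ∧ p.2 ≠ 0} : ℂ) =
      Fintype.card F - 2 + ∑ j ∈ Ico 1 (2 * m), (ψ ^ j) c⁻¹ * jacobiSum (ψ ^ j) (ψ ^ m) := by
  have hm := pos_of_orderOf_eq_two_mul hψ
  have hfib : #{p : F × F | p.1 ^ 2 + c * p.2 ^ (2 * m) = 1 ∧ p.2 ≠ 0} =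
      ∑ y ∈ univ.erase 0, #{a | a ^ 2 = 1 - c * y ^ (2 * m)} := by
    rw [card_filter, Fintype.sum_prod_type_right, ← sum_erase univ (a := 0) (by simp)]
    refine sum_congr rfl fun y hy => ?_
    rw [card_filter]
    refine sum_congr rfl fun a _ => ?_
    simp [ne_of_mem_erase hy, eq_sub_iff_add_eq]
  rw [hfib, Nat.cast_sum, sum_erase_eq_sub (mem_univ 0)]
  simp only [card_sq_eq_one_add hψ, sum_add_distrib,
    sum_apply_one_sub_mul_pow_eq_sum_jacobiSum hψ hc, sum_const, card_univ, nsmul_one,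
    zero_pow (by omega : 2 * m ≠ 0), mul_zero, sub_zero, map_one]
  ring

end CharacterOfEvenOrder

theorem abs_card_sq_add_mul_pow_sub_le [DecidableEq F] {m : ℕ} (hm : 2 * m ∣ Fintype.card F - 1)
    {c : F} (hc : c ≠ 0) :
    |(#{p : F × F | p.1 ^ 2 + c * p.2 ^ (2 * m) = 1 ∧ p.2 ≠ 0} : ℝ) - (Fintype.card F - 2)| ≤
      1 + (2 * m - 2) * √(Fintype.card F) := by
  have hm0 : 2 * m ≠ 0 := (Nat.pos_of_dvd_of_pos hm (Nat.sub_pos_of_lt Fintype.one_lt_card)).ne'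
  obtain ⟨ψ, hψ⟩ := MulChar.exists_mulChar_orderOf F hm (Complex.isPrimitiveRoot_exp _ hm0)
  have hdiff : (#{p : F × F | p.1 ^ 2 + c * p.2 ^ (2 * m) = 1 ∧ p.2 ≠ 0} : ℂ) -
      (Fintype.card F - 2) = ∑ j ∈ Ico 1 (2 * m), (ψ ^ j) c⁻¹ * jacobiSum (ψ ^ j) (ψ ^ m) := by
    rw [card_sq_add_mul_pow_eq_one hψ hc]
    ring
  rw [← Real.norm_eq_abs, ← Complex.norm_real]
  push_cast
  rw [hdiff]
  exact norm_sum_jacobiSum_le hψ hc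

end JacobiSum

theorem stmt13_general {F : Type*} [Field F] [Fintype F] (q : ℕ) (hq : Fintype.card F = q)
    (hdvd : 10 ∣ q - 1)
    (c : F) (hc : c ≠ 0) :
    (q : ℝ) - 8 * Real.sqrt q - 3 ≤
      (Nat.card {xy : F × F // xy.1 ^ 2 + c * xy.2 ^ 10 = 1 ∧ xy.2 ≠ 0} : ℝ) ∧
    (72 ≤ q → ∃ a y : F, y ≠ 0 ∧ a ^ 2 + c * y ^ 10 = 1) := by
  classical
  have hN : Nat.card {xy : F × F // xy.1 ^ 2 + c * xy.2 ^ 10 = 1 ∧ xy.2 ≠ 0} =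
      #{p : F × F | p.1 ^ 2 + c * p.2 ^ (2 * 5) = 1 ∧ p.2 ≠ 0} := by
    rw [Nat.card_eq_fintype_card, Fintype.card_subtype]
  have hbound := abs_card_sq_add_mul_pow_sub_le (m := 5) (hq ▸ hdvd) hc
  rw [hq, ← hN, Nat.cast_ofNat] at hbound
  have hlower : (q : ℝ) - 8 * √q - 3 ≤
      Nat.card {xy : F × F // xy.1 ^ 2 + c * xy.2 ^ 10 = 1 ∧ xy.2 ≠ 0} := by
    linarith [(abs_le.mp hbound).1]
  refine ⟨hlower, fun h72 => ?_⟩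
  have hq72 : (72 : ℝ) ≤ q := by exact_mod_cast h72
  have hpos : 0 < (q : ℝ) - 8 * √q - 3 := by
    nlinarith [Real.sq_sqrt (Nat.cast_nonneg q), Real.sqrt_nonneg q]
  obtain ⟨⟨⟨a, y⟩, h1, h2⟩⟩ := Nat.card_pos_iff.mp (by exact_mod_cast hpos.trans_le hlower)
  exact ⟨a, y, h2, h1⟩

/-- Let `q` be a prime power with `10 ∣ q - 1` and let `c ∈ F_q*`. Then the number `N` of pairs
`(a, y) ∈ F_q × F_q` with `a² + c y¹⁰ = 1` and `y ≠ 0` satisfies `N ≥ q - 8√q - 3`.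
In particular, if `q ≥ 72` then such a pair exists. -/
theorem stmt13 {F : Type*} [Field F] [Fintype F] (q : ℕ) (hq : Fintype.card F = q)
    (hqpp : ∃ (r n : ℕ), r.Prime ∧ 0 < n ∧ q = r ^ n) (hdvd : 10 ∣ q - 1)
    (c : F) (hc : c ≠ 0) :
    (q : ℝ) - 8 * Real.sqrt q - 3 ≤
      (Nat.card {xy : F × F // xy.1 ^ 2 + c * xy.2 ^ 10 = 1 ∧ xy.2 ≠ 0} : ℝ) ∧
    (72 ≤ q → ∃ a y : F, y ≠ 0 ∧ a ^ 2 + c * y ^ 10 = 1) :=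
  stmt13_general q hq hdvd c hc
end

section
/- Let q be a prime power with 10 dividing q − 1, and let d, c ∈ F_q^* and e ∈ F_q^*. Then the number N of pairs (b, y) ∈ F_q × F_q with d b^2 + c y^{10} = e and y ≠ 0 satisfies N ≥ q − 8√q − 3. In particular, if q ≥ 72 then there exists a pair (b, y) ∈ F_q × F_q with y ≠ 0 and d b^2 + c y^{10} = e. -/
/-!
Write `q = #F` and `N` for the number of solutions. Counting square roots with a character `ψ`
of order 2 gives `N = q - 1 + ψ(d⁻¹) ∑_{y ≠ 0} ψ(e - c yⁿ)`. For a character `χ` of order `n`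
the number of `n`-th roots of `a ≠ 0` is `∑_{k < n} χᵏ(a)`; taking `ψ = χ^(n/2)` and substituting
`a = (e/c) x` turns the sum into `∑_{k < n} χᵏ(e/c) ψ(e) J(χᵏ, ψ)`. Every Jacobi sum
`J(χᵏ, ψ)` has absolute value `√q`, except for `k = 0` and `k = n/2`, where it is `-1` and
`-ψ(-1)`. Hence `|N - (q - 1)| ≤ (n - 2)√q + 2`, which for `n = 10` is the bound, and
`q - 8√q - 3 > 0` once `q ≥ 72`.
-/

open Finset Polynomial

namespace MulChar

lemma norm_apply_le_one {M : Type*} [CommMonoid M] [Finite Mˣ] (χ : MulChar M ℂ) (a : M) :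
    ‖χ a‖ ≤ 1 := by
  by_cases ha : IsUnit a
  · refine (Complex.norm_eq_one_of_pow_eq_one (n := Nat.card Mˣ) ?_ Nat.card_pos.ne').le
    rw [← ha.unit_spec, ← map_pow, ← Units.val_pow_eq_pow_val, pow_card_eq_one', Units.val_one,
      map_one]
  · rw [χ.map_nonunit ha, norm_zero]
    exact zero_le_one

lemma orderOf_apply_eq_orderOf {M R : Type*} [CommMonoid M] [CommMonoidWithZero R] {g : Mˣ}
    (hg : ∀ x, x ∈ Subgroup.zpowers g) (χ : MulChar M R) : orderOf (χ g) = orderOf χ :=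
  orderOf_eq_orderOf_iff.mpr fun k ↦ by rw [eq_iff hg, pow_apply_coe, one_apply_coe]

end MulChar

lemma FiniteField.exists_isPrimitiveRoot {F : Type*} [Field F] [Fintype F] {n : ℕ}
    (hn : n ∣ Fintype.card F - 1) : ∃ ζ : F, IsPrimitiveRoot ζ n := by
  classical
  obtain ⟨g, hg⟩ := IsCyclic.exists_ofOrder_eq_natCard (α := Fˣ)
  have hg' : orderOf g = Fintype.card F - 1 := by
    rw [hg, Nat.card_eq_fintype_card, Fintype.card_units]
  have hζ := IsPrimitiveRoot.orderOf (g ^ (orderOf g / n))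
  rw [orderOf_pow_orderOf_div (orderOf_pos g).ne' (hg' ▸ hn)] at hζ
  exact ⟨_, IsPrimitiveRoot.coe_units_iff.mpr hζ⟩

lemma geom_sum_eq_zero_of_pow_eq_one {R : Type*} [CommRing R] [IsDomain R] {z : R} {n : ℕ}
    (hz : z ^ n = 1) (hz1 : z ≠ 1) : ∑ k ∈ range n, z ^ k = 0 := by
  have := geom_sum_mul z n
  rw [hz, sub_self, mul_eq_zero] at this
  exact this.resolve_right (sub_ne_zero.mpr hz1)

lemma norm_jacobiSum_eq_sqrt_card {F : Type*} [Field F] [Fintype F] {χ ψ : MulChar F ℂ}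
    (hχ : χ ≠ 1) (hψ : ψ ≠ 1) (hχψ : χ * ψ ≠ 1) :
    ‖jacobiSum χ ψ‖ = √(Fintype.card F) := by
  have hchar : ringChar ℂ ≠ ringChar F := by
    rw [ringChar.eq_zero]
    exact (CharP.char_is_prime F (ringChar F)).ne_zero.symm
  have hconj : jacobiSum χ⁻¹ ψ⁻¹ = starRingEnd ℂ (jacobiSum χ ψ) := by
    simp only [jacobiSum, map_sum, map_mul, ← MulChar.star_apply']
    rfl
  have h := jacobiSum_mul_jacobiSum_inv hchar hχ hψ hχψ
  rw [hconj, Complex.mul_conj] at h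
  rw [Complex.norm_def, show Complex.normSq (jacobiSum χ ψ) = Fintype.card F by exact_mod_cast h]

namespace MulChar

variable {F R : Type*} [Field F] [Fintype F] [CommRing R]

lemma apply_eq_one_iff_exists_pow_orderOf_eq (χ : MulChar F R) {a : F} (ha : a ≠ 0) :
    χ a = 1 ↔ ∃ α, α ^ orderOf χ = a := by
  constructor
  · intro h
    obtain ⟨g, hg⟩ := IsCyclic.exists_generator (α := Fˣ)
    obtain ⟨i, hi⟩ := (Submonoid.mem_powers_iff _ _).mp
      (mem_powers_iff_mem_zpowers.mpr (hg (Units.mk0 a ha)))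
    have hai : a = ((g ^ i : Fˣ) : F) := by rw [hi, Units.val_mk0]
    have hdvd : orderOf χ ∣ i := by
      rw [← orderOf_apply_eq_orderOf hg]
      exact orderOf_dvd_of_pow_eq_one (by rw [← map_pow, ← Units.val_pow_eq_pow_val, ← hai, h])
    obtain ⟨j, rfl⟩ := hdvd
    exact ⟨(g ^ j : Fˣ), by rw [hai, ← Units.val_pow_eq_pow_val, ← pow_mul, mul_comm]⟩
  · rintro ⟨α, rfl⟩
    have hα : α ≠ 0 := by rintro rfl; simp [(orderOf_pos χ).ne'] at ha
    rw [map_pow, ← pow_apply' χ (orderOf_pos χ).ne', pow_orderOf_eq_one, one_apply hα.isUnit]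

lemma sum_mul_apply_sub_mul_eq_mul_jacobiSum (φ ψ : MulChar F R) {c e : F} (hc : c ≠ 0)
    (he : e ≠ 0) : ∑ a, φ a * ψ (e - c * a) = φ (e / c) * ψ e * jacobiSum φ ψ := by
  rw [jacobiSum, mul_sum]
  refine Fintype.sum_equiv (Equiv.mulLeft₀ (c / e) (div_ne_zero hc he)) _ _ fun a ↦ ?_
  have hφ : φ a = φ (e / c) * φ (c / e * a) := by rw [← map_mul]; congr 1; field_simp
  have hψ : ψ (e - c * a) = ψ e * ψ (1 - c / e * a) := by rw [← map_mul]; congr 1; field_simp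
  rw [hφ, hψ]
  simp only [Equiv.mulLeft₀_apply]
  ring

variable [IsDomain R]

lemma card_nthRootsFinset_eq_sum_pow_apply {χ : MulChar F R} {n : ℕ} (hχ : orderOf χ = n)
    {a : F} (ha : a ≠ 0) : (#(nthRootsFinset n a) : R) = ∑ k ∈ range n, (χ ^ k) a := by
  classical
  obtain ⟨ζ, hζ⟩ := FiniteField.exists_isPrimitiveRoot (hχ ▸ χ.orderOf_dvd_card_sub_one)
  have hpow : ∀ k, (χ ^ k) a = χ a ^ k := fun k ↦ by
    rw [← Units.val_mk0 ha, pow_apply_coe]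
  rw [nthRootsFinset_def, Multiset.toFinset_card_of_nodup (hζ.nthRoots_nodup ha), hζ.card_nthRoots,
    Finset.sum_congr rfl fun k _ ↦ hpow k, ← hχ, ← apply_eq_one_iff_exists_pow_orderOf_eq χ ha]
  by_cases h : χ a = 1
  · simp [h]
  · rw [if_neg h, Nat.cast_zero, geom_sum_eq_zero_of_pow_eq_one _ h]
    rw [← hpow, pow_orderOf_eq_one, one_apply ha.isUnit]

lemma card_nthRootsFinset_two_eq_one_add {ψ : MulChar F R} (hψ : orderOf ψ = 2) (a : F) :
    (#(nthRootsFinset 2 a) : R) = 1 + ψ a := by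
  rcases eq_or_ne a 0 with rfl | ha
  · have : nthRootsFinset 2 (0 : F) = {0} := by ext; simp [mem_nthRootsFinset]
    simp [this]
  · rw [card_nthRootsFinset_eq_sum_pow_apply hψ ha, sum_range_succ, sum_range_one, pow_zero,
      pow_one, one_apply ha.isUnit]

lemma sum_pow_eq_sum_sum_pow_apply_mul [DecidableEq F] {χ : MulChar F R} {n : ℕ}
    (hχ : orderOf χ = n) (f : F → R) :
    ∑ y ∈ univ with y ≠ 0, f (y ^ n) = ∑ k ∈ range n, ∑ a, (χ ^ k) a * f a := by
  have hn : n ≠ 0 := hχ ▸ (orderOf_pos χ).ne'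
  have hfiber (a : F) (ha : a ≠ 0) :
      ({y ∈ univ | y ≠ 0 ∧ y ^ n = a} : Finset F) = nthRootsFinset n a := by
    ext y
    simp only [mem_filter, mem_univ, true_and, mem_nthRootsFinset (Nat.pos_of_ne_zero hn),
      and_iff_right_iff_imp]
    rintro rfl h
    exact ha (by rw [h, zero_pow hn])
  calc ∑ y ∈ univ with y ≠ 0, f (y ^ n)
      = ∑ a ∈ univ with a ≠ 0, ∑ y ∈ univ with y ≠ 0 ∧ y ^ n = a, f a := by
        rw [← sum_fiberwise_of_maps_to (g := (· ^ n)) (t := {a ∈ univ | a ≠ 0})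
          fun y hy ↦ by simp_all]
        refine sum_congr rfl fun a _ ↦ ?_
        rw [filter_filter]
        exact sum_congr rfl fun y hy ↦ by rw [(mem_filter.mp hy).2.2]
    _ = ∑ a ∈ univ with a ≠ 0, ∑ k ∈ range n, (χ ^ k) a * f a := by
        refine sum_congr rfl fun a ha ↦ ?_
        have ha : a ≠ 0 := (mem_filter.mp ha).2
        rw [sum_const, hfiber a ha, nsmul_eq_mul, card_nthRootsFinset_eq_sum_pow_apply hχ ha,
          sum_mul]
    _ = ∑ k ∈ range n, ∑ a, (χ ^ k) a * f a := by
        rw [sum_filter_of_ne fun a _ h ↦ ?_, sum_comm]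
        rintro rfl
        simp at h

lemma natCard_sq_add_pow_solutions_eq [DecidableEq F] {ψ : MulChar F R} (hψ : orderOf ψ = 2)
    (n : ℕ) {d : F} (hd : d ≠ 0) (c e : F) :
    (Nat.card {p : F × F // d * p.1 ^ 2 + c * p.2 ^ n = e ∧ p.2 ≠ 0} : R) =
      (Fintype.card F - 1 : R) + ψ d⁻¹ * ∑ y ∈ univ with y ≠ 0, ψ (e - c * y ^ n) := by
  have hcount : Nat.card {p : F × F // d * p.1 ^ 2 + c * p.2 ^ n = e ∧ p.2 ≠ 0} =
      ∑ y ∈ univ with y ≠ 0, #(nthRootsFinset 2 (d⁻¹ * (e - c * y ^ n))) := by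
    rw [Nat.card_eq_fintype_card, Fintype.card_subtype, card_filter, Fintype.sum_prod_type_right,
      sum_filter]
    refine sum_congr rfl fun y _ ↦ ?_
    split_ifs with hy
    · rw [← card_filter]
      congr 1
      ext b
      simp only [mem_filter, mem_univ, true_and, mem_nthRootsFinset two_pos, hy, ne_eq,
        not_false_eq_true, and_true]
      rw [eq_inv_mul_iff_mul_eq₀ hd, eq_sub_iff_add_eq]
    · simp [hy]
  have hunits : #({y ∈ univ | y ≠ 0} : Finset F) = Fintype.card F - 1 := by
    rw [filter_ne', card_erase_of_mem (mem_univ 0), card_univ]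
  rw [hcount, Nat.cast_sum]
  simp only [card_nthRootsFinset_two_eq_one_add hψ, map_mul, sum_add_distrib, sum_const, hunits,
    mul_sum]
  rw [nsmul_eq_mul, mul_one, Nat.cast_sub Fintype.card_pos, Nat.cast_one]

lemma sum_norm_jacobiSum_pow_le {χ : MulChar F ℂ} {m : ℕ} (hχ : orderOf χ = 2 * m) :
    ∑ k ∈ range (2 * m), ‖jacobiSum (χ ^ k) (χ ^ m)‖ ≤
      (2 * m - 2 : ℝ) * √(Fintype.card F) + 2 := by
  have hm0 : 0 < m := by have := orderOf_pos χ; omega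
  have hψ : χ ^ m ≠ 1 := pow_ne_one_of_lt_orderOf hm0.ne' (by omega)
  have hinv : (χ ^ m)⁻¹ = χ ^ m := inv_eq_of_mul_eq_one_right <| by
    rw [← pow_add, ← two_mul, ← hχ, pow_orderOf_eq_one]
  have hJ0 : ‖jacobiSum (χ ^ 0) (χ ^ m)‖ ≤ 1 := by
    rw [pow_zero, jacobiSum_one_nontrivial hψ, norm_neg, norm_one]
  have hJm : ‖jacobiSum (χ ^ m) (χ ^ m)‖ ≤ 1 := by
    calc ‖jacobiSum (χ ^ m) (χ ^ m)‖ = ‖jacobiSum (χ ^ m) (χ ^ m)⁻¹‖ := by rw [hinv]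
      _ = ‖(χ ^ m) (-1)‖ := by rw [jacobiSum_nontrivial_inv hψ, norm_neg]
      _ ≤ 1 := norm_apply_le_one _ _
  have hrest : ∀ k ∈ ((range (2 * m)).erase 0).erase m,
      ‖jacobiSum (χ ^ k) (χ ^ m)‖ ≤ √(Fintype.card F) := by
    intro k hk
    simp only [mem_erase, mem_range] at hk
    refine (norm_jacobiSum_eq_sqrt_card (pow_ne_one_of_lt_orderOf hk.2.1 (by omega)) hψ ?_).le
    rw [← pow_add]
    intro h
    have := Nat.eq_of_dvd_of_lt_two_mul (by omega) (hχ ▸ orderOf_dvd_of_pow_eq_one h) (by omega)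
    omega
  have h0 : 0 ∈ range (2 * m) := mem_range.mpr (by omega)
  have hm : m ∈ (range (2 * m)).erase 0 := mem_erase.mpr ⟨hm0.ne', mem_range.mpr (by omega)⟩
  have hcard : #(((range (2 * m)).erase 0).erase m) = 2 * m - 2 := by
    rw [card_erase_of_mem hm, card_erase_of_mem h0, card_range]
    omega
  rw [← add_sum_erase _ _ h0, ← add_sum_erase _ _ hm]
  have := sum_le_card_nsmul _ _ _ hrest
  rw [hcard, nsmul_eq_mul, Nat.cast_sub (by omega)] at this
  push_cast at this
  linarith

end MulChar

theorem abs_natCard_sq_add_pow_solutions_sub_le {F : Type*} [Field F] [Fintype F] {n : ℕ}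
    (hn : Even n) (hdvd : n ∣ Fintype.card F - 1) {d c e : F} (hd : d ≠ 0) (hc : c ≠ 0)
    (he : e ≠ 0) :
    |(Nat.card {p : F × F // d * p.1 ^ 2 + c * p.2 ^ n = e ∧ p.2 ≠ 0} : ℝ) -
        (Fintype.card F - 1)| ≤ (n - 2) * √(Fintype.card F) + 2 := by
  classical
  have hn0 : n ≠ 0 := by
    rintro rfl
    have := Fintype.one_lt_card (α := F)
    rw [zero_dvd_iff] at hdvd
    omega
  obtain ⟨χ, hχ⟩ := MulChar.exists_mulChar_orderOf F hdvd (Complex.isPrimitiveRoot_exp n hn0)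
  obtain ⟨m, rfl⟩ := hn.two_dvd
  have hψ : orderOf (χ ^ m) = 2 := by
    have := orderOf_pow_orderOf_div (x := χ) (n := 2) (hχ ▸ hn0) (hχ ▸ dvd_mul_right 2 m)
    rwa [hχ, Nat.mul_div_cancel_left m two_pos] at this
  have hN := MulChar.natCard_sq_add_pow_solutions_eq hψ (2 * m) hd c e
  rw [MulChar.sum_pow_eq_sum_sum_pow_apply_mul hχ fun a ↦ (χ ^ m) (e - c * a)] at hN
  simp only [MulChar.sum_mul_apply_sub_mul_eq_mul_jacobiSum _ _ hc he] at hN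
  calc |(Nat.card {p : F × F // d * p.1 ^ 2 + c * p.2 ^ (2 * m) = e ∧ p.2 ≠ 0} : ℝ) -
          (Fintype.card F - 1)|
      = ‖(χ ^ m) d⁻¹ * ∑ k ∈ range (2 * m),
          (χ ^ k) (e / c) * (χ ^ m) e * jacobiSum (χ ^ k) (χ ^ m)‖ := by
        rw [eq_sub_of_add_eq' hN.symm, ← Real.norm_eq_abs, ← Complex.norm_real]
        push_cast
        rfl
    _ ≤ ∑ k ∈ range (2 * m), ‖jacobiSum (χ ^ k) (χ ^ m)‖ := by
        rw [norm_mul]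
        refine (mul_le_of_le_one_left (norm_nonneg _) (MulChar.norm_apply_le_one _ _)).trans
          ((norm_sum_le _ _).trans (sum_le_sum fun k _ ↦ ?_))
        rw [norm_mul, norm_mul]
        exact mul_le_of_le_one_left (norm_nonneg _) (mul_le_one₀ (MulChar.norm_apply_le_one _ _)
          (norm_nonneg _) (MulChar.norm_apply_le_one _ _))
    _ ≤ _ := by
        push_cast
        exact MulChar.sum_norm_jacobiSum_pow_le hχ

theorem stmt14_general {F : Type*} [Field F] [Fintype F] (q : ℕ) (hq : Fintype.card F = q)
    (hdvd : 10 ∣ q - 1)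
    (d c e : F) (hd : d ≠ 0) (hc : c ≠ 0) (he : e ≠ 0) :
    (q : ℝ) - 8 * Real.sqrt q - 3 ≤
      (Nat.card {by_ : F × F // d * by_.1 ^ 2 + c * by_.2 ^ 10 = e ∧ by_.2 ≠ 0} : ℝ) ∧
    (72 ≤ q → ∃ b y : F, y ≠ 0 ∧ d * b ^ 2 + c * y ^ 10 = e) := by
  subst hq
  have h := abs_natCard_sq_add_pow_solutions_sub_le (n := 10) ⟨5, rfl⟩ hdvd hd hc he
  rw [show ((10 : ℕ) : ℝ) - 2 = 8 by norm_num] at h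
  have hN := (abs_le.mp h).1
  refine ⟨by linarith, fun h72 ↦ ?_⟩
  have hq : (72 : ℝ) ≤ Fintype.card F := by exact_mod_cast h72
  have hsqrt : √(Fintype.card F : ℝ) < (Fintype.card F - 3) / 8 := by
    rw [Real.sqrt_lt' (by linarith)]
    nlinarith
  have hpos : (0 : ℝ) < Nat.card {p : F × F // d * p.1 ^ 2 + c * p.2 ^ 10 = e ∧ p.2 ≠ 0} := by
    linarith
  obtain ⟨⟨⟨b, y⟩, hby, hy⟩⟩ := Nat.card_pos_iff.mp (Nat.cast_pos.mp hpos) |>.1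
  exact ⟨b, y, hy, hby⟩

/-- Let `q` be a prime power with `10 ∣ q - 1`, and let `d, c, e ∈ F_q*`. Then the number `N` of
pairs `(b, y) ∈ F_q × F_q` with `d b² + c y¹⁰ = e` and `y ≠ 0` satisfies `N ≥ q - 8√q - 3`.
In particular, if `q ≥ 72` then such a pair exists. -/
theorem stmt14 {F : Type*} [Field F] [Fintype F] (q : ℕ) (hq : Fintype.card F = q)
    (hqpp : ∃ (r n : ℕ), r.Prime ∧ 0 < n ∧ q = r ^ n) (hdvd : 10 ∣ q - 1)
    (d c e : F) (hd : d ≠ 0) (hc : c ≠ 0) (he : e ≠ 0) :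
    (q : ℝ) - 8 * Real.sqrt q - 3 ≤
      (Nat.card {by_ : F × F // d * by_.1 ^ 2 + c * by_.2 ^ 10 = e ∧ by_.2 ≠ 0} : ℝ) ∧
    (72 ≤ q → ∃ b y : F, y ≠ 0 ∧ d * b ^ 2 + c * y ^ 10 = e) :=
  stmt14_general q hq hdvd d c e hd hc he
end
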